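/- arXiv:1405.1212 — 3 statements merged into one kernel-verified Lean document; each statement's English description precedes it below -/
import Mathlib

section
/- Let (Ω, F, Q) be a probability space, let Z : Ω → [0,∞) be measurable with ∫ Z dQ = 1, and define the probability measure P = Z·Q (i.e., P is Q with density Z). Let D, π, V : Ω → [0,∞) be measurable, Z·1_{π ≥ D}, Z·1_{V ≥ D}, π, V all Q-integrable, and let m > 0. Assume: (i) for Q-almost every ω, for all x ≥ 0, Z(ω)·1_{x ≥ D(ω)} ≤ Z(ω)·1_{π(ω) ≥ D(ω)} + m·(x − π(ω)); (ii) ∫ V dQ ≤ ∫ π dQ. Then P(V ≥ D) ≤ P(π ≥ D). -/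
open MeasureTheory

/-- Quantile-hedging instance of the paper's Theorem 1 (success factor `φ^v_d = 1_{v ≥ d}`):
among all terminal wealths `V` whose cost under the pricing measure `Q` does not exceed that
of `π`, the probability of successful hedge `P(V ≥ D)` is maximized by `π`, where
`P = Z · Q`. -/
theorem stmt1 {Ω : Type*} [MeasurableSpace Ω] (Q : Measure Ω) [IsProbabilityMeasure Q]
    (Z : Ω → ℝ) (hZmeas : Measurable Z) (hZ0 : ∀ ω, 0 ≤ Z ω)
    (hZ1 : ∫ ω, Z ω ∂Q = 1)
    (P : Measure Ω) (hP : P = Q.withDensity (fun ω => ENNReal.ofReal (Z ω)))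
    (D π V : Ω → ℝ) (hDmeas : Measurable D) (hπmeas : Measurable π) (hVmeas : Measurable V)
    (hD0 : ∀ ω, 0 ≤ D ω) (hπ0 : ∀ ω, 0 ≤ π ω) (hV0 : ∀ ω, 0 ≤ V ω)
    (hint1 : Integrable (fun ω => Z ω * (if D ω ≤ π ω then (1 : ℝ) else 0)) Q)
    (hint2 : Integrable (fun ω => Z ω * (if D ω ≤ V ω then (1 : ℝ) else 0)) Q)
    (hπint : Integrable π Q) (hVint : Integrable V Q)
    (m : ℝ) (hm : 0 < m)
    (hdom : ∀ᵐ ω ∂Q, ∀ x, 0 ≤ x →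
      Z ω * (if D ω ≤ x then (1 : ℝ) else 0) ≤
        Z ω * (if D ω ≤ π ω then (1 : ℝ) else 0) + m * (x - π ω))
    (hcost : ∫ ω, V ω ∂Q ≤ ∫ ω, π ω ∂Q) :
    P {ω | D ω ≤ V ω} ≤ P {ω | D ω ≤ π ω} := by
  have hA : MeasurableSet {ω | D ω ≤ V ω} := measurableSet_le hDmeas hVmeas
  have hB : MeasurableSet {ω | D ω ≤ π ω} := measurableSet_le hDmeas hπmeas
  -- indicator form
  have eqA : (fun ω => Z ω * (if D ω ≤ V ω then (1 : ℝ) else 0)) =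
      Set.indicator {ω | D ω ≤ V ω} Z := by
    funext ω
    by_cases h : D ω ≤ V ω <;> simp [Set.indicator, h]
  have eqB : (fun ω => Z ω * (if D ω ≤ π ω then (1 : ℝ) else 0)) =
      Set.indicator {ω | D ω ≤ π ω} Z := by
    funext ω
    by_cases h : D ω ≤ π ω <;> simp [Set.indicator, h]
  -- real integral inequality
  have key : ∫ ω, Z ω * (if D ω ≤ V ω then (1 : ℝ) else 0) ∂Q ≤
      ∫ ω, Z ω * (if D ω ≤ π ω then (1 : ℝ) else 0) ∂Q := by
    have hsub : Integrable (fun ω => V ω - π ω) Q := hVint.sub hπint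
    have h1 : ∫ ω, Z ω * (if D ω ≤ V ω then (1 : ℝ) else 0) ∂Q ≤
        ∫ ω, (Z ω * (if D ω ≤ π ω then (1 : ℝ) else 0) + m * (V ω - π ω)) ∂Q := by
      refine integral_mono_ae hint2 (hint1.add (hsub.const_mul m)) ?_
      filter_upwards [hdom] with ω h
      exact h (V ω) (hV0 ω)
    have h2 : ∫ ω, (Z ω * (if D ω ≤ π ω then (1 : ℝ) else 0) + m * (V ω - π ω)) ∂Q =
        ∫ ω, Z ω * (if D ω ≤ π ω then (1 : ℝ) else 0) ∂Q +
          m * (∫ ω, V ω ∂Q - ∫ ω, π ω ∂Q) := by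
      rw [integral_add hint1 (hsub.const_mul m), MeasureTheory.integral_const_mul,
        integral_sub hVint hπint]
    have h3 : m * (∫ ω, V ω ∂Q - ∫ ω, π ω ∂Q) ≤ 0 :=
      mul_nonpos_of_nonneg_of_nonpos hm.le (by linarith)
    calc _ ≤ _ := h1
    _ = _ := h2
    _ ≤ _ := by linarith
  -- convert to measures
  have conv : ∀ (s : Set Ω), MeasurableSet s → Integrable (Set.indicator s Z) Q →
      P s = ENNReal.ofReal (∫ ω, Set.indicator s Z ω ∂Q) := by
    intro s hs hint
    rw [hP, withDensity_apply _ hs]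
    rw [← ofReal_integral_eq_lintegral_ofReal ((integrable_indicator_iff hs).mp hint)
      (Filter.Eventually.of_forall fun ω => hZ0 ω)]
    rw [← integral_indicator hs]
  rw [conv _ hA (eqA ▸ hint2), conv _ hB (eqB ▸ hint1)]
  apply ENNReal.ofReal_le_ofReal
  rw [← eqA, ← eqB]
  exact key
end

section
/- Let (Ω, F, Q) be a probability space, G ⊆ F a sub-σ-algebra, Z : Ω → [0,∞) bounded measurable, and φ : [0,∞) × Ω → [0,∞) bounded and jointly measurable such that for every ω, x ↦ φ(x, ω) is nondecreasing and right-continuous. Then there exists a jointly measurable function G_Q : [0,∞) × Ω → ℝ such that: (i) for every ω, x ↦ G_Q(x, ω) is nondecreasing; (ii) for every x ≥ 0, ω ↦ G_Q(x, ω) is a version of the conditional expectation E^Q[Z·φ(x, ·) | G]. -/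
open MeasureTheory Filter Topology ENNReal

/-- Existence of a jointly measurable, pathwise nondecreasing version of the family of
conditional expectations `x ↦ E^Q[Z · φ(x, ·) | m]` (the paper's `G_Q(x)`), for a bounded
success factor `φ` nondecreasing and right-continuous in the wealth level `x`. -/
theorem stmt6 {Ω : Type*} (m : MeasurableSpace Ω) {mΩ : MeasurableSpace Ω} (Q : Measure Ω) [IsProbabilityMeasure Q]
    (hm : m ≤ mΩ)
    (Z : Ω → ℝ) (hZmeas : Measurable Z) (hZ0 : ∀ ω, 0 ≤ Z ω) (hZbdd : ∃ C, ∀ ω, Z ω ≤ C)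
    (φ : ℝ → Ω → ℝ) (hφmeas : Measurable (Function.uncurry φ))
    (hφ0 : ∀ x ω, 0 ≤ φ x ω) (hφbdd : ∃ C, ∀ x ω, φ x ω ≤ C)
    (hφmono : ∀ ω, MonotoneOn (fun x => φ x ω) (Set.Ici 0))
    (hφrc : ∀ ω, ∀ x : ℝ, 0 ≤ x → ContinuousWithinAt (fun y => φ y ω) (Set.Ici x) x) :
    ∃ G : ℝ → Ω → ℝ, Measurable (Function.uncurry G) ∧
      (∀ ω, MonotoneOn (fun x => G x ω) (Set.Ici 0)) ∧
      ∀ x : ℝ, 0 ≤ x → (fun ω => G x ω) =ᵐ[Q] Q[fun ω => Z ω * φ x ω | m] := by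
  classical
  obtain ⟨CZ, hCZ⟩ := hZbdd
  obtain ⟨Cφ, hCφ⟩ := hφbdd
  set M : ℝ := max CZ 0 * max Cφ 0 with hMdef
  have hMnn : 0 ≤ M := mul_nonneg (le_max_right _ _) (le_max_right _ _)
  have hfnn : ∀ (x : ℝ) ω, 0 ≤ Z ω * φ x ω := fun x ω => mul_nonneg (hZ0 ω) (hφ0 x ω)
  have hfb : ∀ (x : ℝ) ω, Z ω * φ x ω ≤ M := fun x ω =>
    mul_le_mul (le_max_of_le_left (hCZ ω)) (le_max_of_le_left (hCφ x ω)) (hφ0 x ω)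
      (le_max_right _ _)
  have hφm : ∀ x : ℝ, Measurable fun ω => φ x ω := fun x =>
    hφmeas.comp (measurable_const.prodMk measurable_id)
  have hfmeas : ∀ x : ℝ, Measurable fun ω => Z ω * φ x ω := fun x => hZmeas.mul (hφm x)
  have hfint : ∀ x : ℝ, Integrable (fun ω => Z ω * φ x ω) Q := by
    intro x
    refine ⟨(hfmeas x).aestronglyMeasurable, HasFiniteIntegral.of_bounded (C := M) ?_⟩
    refine Filter.Eventually.of_forall fun ω => ?_
    rw [Real.norm_eq_abs, abs_of_nonneg (hfnn x ω)]; exact hfb x ω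
  set g : ℚ → Ω → ℝ := fun q => Q[fun ω => Z ω * φ (q : ℝ) ω | m] with hgdef
  have hgmeas : ∀ q : ℚ, Measurable[m] (g q) := fun q =>
    stronglyMeasurable_condExp.measurable
  set Ghat : ℝ → Ω → ℝ≥0∞ := fun x ω =>
    ⨅ q : ℚ, if (max x 0 : ℝ) < (q : ℝ) then ENNReal.ofReal (g q ω) else ⊤ with hGhatdef
  have hGne : ∀ x ω, Ghat x ω ≠ ⊤ := by
    intro x ω
    obtain ⟨q, hq⟩ := exists_rat_gt (max x 0)
    have h1 : Ghat x ω ≤ (if (max x 0 : ℝ) < (q : ℝ) then ENNReal.ofReal (g q ω) else ⊤) :=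
      iInf_le _ q
    rw [if_pos hq] at h1
    exact ne_top_of_le_ne_top ENNReal.ofReal_ne_top h1
  have hGhatmono : ∀ ω, Monotone fun x => Ghat x ω := by
    intro ω x y hxy
    refine le_iInf fun r => ?_
    by_cases h : (max y 0 : ℝ) < (r : ℝ)
    · have h' : (max x 0 : ℝ) < (r : ℝ) := lt_of_le_of_lt (max_le_max hxy le_rfl) h
      have h1 : Ghat x ω ≤ (if (max x 0 : ℝ) < (r : ℝ) then ENNReal.ofReal (g r ω) else ⊤) :=
        iInf_le _ r
      rw [if_pos h'] at h1
      rw [if_pos h]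
      exact h1
    · rw [if_neg h]; exact le_top
  refine ⟨fun x ω => (Ghat x ω).toReal, ?_, ?_, ?_⟩
  · -- joint measurability
    refine Measurable.ennreal_toReal ?_
    refine Measurable.iInf fun q => ?_
    refine Measurable.ite ?_ ?_ measurable_const
    · exact measurableSet_lt ((measurable_fst.max measurable_const)) measurable_const
    · exact (((hgmeas q).mono hm le_rfl).comp measurable_snd).ennreal_ofReal
  · -- monotonicity
    intro ω x hx y hy hxy
    exact ENNReal.toReal_mono (hGne y ω) (hGhatmono ω hxy)
  · -- conditional expectation identification
    intro x hx
    -- rational sequence strictly decreasing to x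
    have hseq : ∀ n : ℕ, ∃ r : ℚ, x + 1 / (n + 2) < (r : ℝ) ∧ (r : ℝ) < x + 1 / (n + 1) := by
      intro n
      apply exists_rat_btwn
      have h1 : (0 : ℝ) < n + 1 := by positivity
      have h2 : (n : ℝ) + 1 < n + 2 := by linarith
      have := one_div_lt_one_div_of_lt h1 h2
      linarith
    choose q hq1 hq2 using hseq
    have hqx : ∀ n, x < (q n : ℝ) := by
      intro n
      have : (0 : ℝ) < 1 / (n + 2) := by positivity
      linarith [hq1 n]
    have hqanti : ∀ n, (q (n + 1) : ℝ) ≤ (q n : ℝ) := by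
      intro n
      have h1 := hq2 (n + 1)
      have h2 := hq1 n
      have h3 : ((n : ℝ) + 1 + 1) = (n : ℝ) + 2 := by ring
      push_cast at h1 h2 ⊢
      rw [h3] at h1
      linarith
    have hqtend : Tendsto (fun n : ℕ => (q n : ℝ)) atTop (𝓝 x) := by
      have hlow : Tendsto (fun n : ℕ => x + 1 / ((n : ℝ) + 2)) atTop (𝓝 x) := by
        have : Tendsto (fun n : ℕ => 1 / ((n : ℝ) + 2)) atTop (𝓝 0) := by
          apply tendsto_one_div_atTop_nhds_zero_nat.comp (tendsto_add_atTop_nat 2) |>.congr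
          intro n; simp only [Function.comp]; push_cast; ring
        simpa using tendsto_const_nhds.add this
      have hhigh : Tendsto (fun n : ℕ => x + 1 / ((n : ℝ) + 1)) atTop (𝓝 x) := by
        have : Tendsto (fun n : ℕ => 1 / ((n : ℝ) + 1)) atTop (𝓝 0) := by
          apply tendsto_one_div_atTop_nhds_zero_nat.comp (tendsto_add_atTop_nat 1) |>.congr
          intro n; simp only [Function.comp]; push_cast; ring
        simpa using tendsto_const_nhds.add this
      exact tendsto_of_tendsto_of_tendsto_of_le_of_le hlow hhigh
        (fun n => (hq1 n).le) (fun n => (hq2 n).le)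
    have hqle : ∀ r : ℚ, x < (r : ℝ) → ∃ n, (q n : ℝ) ≤ (r : ℝ) := by
      intro r hr
      obtain ⟨n, hn⟩ := (hqtend.eventually (eventually_lt_nhds hr)).exists
      exact ⟨n, hn.le⟩
    have hφtend : ∀ ω, Tendsto (fun n => φ (q n : ℝ) ω) atTop (𝓝 (φ x ω)) := by
      intro ω
      refine (hφrc ω x hx).tendsto.comp ?_
      exact tendsto_nhdsWithin_of_tendsto_nhds_of_eventually_within _ hqtend
        (Filter.Eventually.of_forall fun n => (hqx n).le)
    -- a.e. facts
    have key : ∀ a b : ℚ, 0 ≤ (a : ℝ) → (a : ℝ) ≤ (b : ℝ) → ∀ᵐ ω ∂Q, g a ω ≤ g b ω := by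
      intro a b ha hab
      exact condExp_mono (hfint (a : ℝ)) (hfint (b : ℝ)) (Filter.Eventually.of_forall fun ω =>
        mul_le_mul_of_nonneg_left (hφmono ω ha (ha.trans hab) hab) (hZ0 ω))
    have hA : ∀ᵐ ω ∂Q, ∀ a b : ℚ, 0 ≤ (a : ℝ) → (a : ℝ) ≤ (b : ℝ) → g a ω ≤ g b ω := by
      rw [ae_all_iff]; intro a; rw [ae_all_iff]; intro b
      by_cases ha : 0 ≤ (a : ℝ)
      · by_cases hab : (a : ℝ) ≤ (b : ℝ)
        · exact (key a b ha hab).mono fun ω h _ _ => h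
        · exact Filter.Eventually.of_forall fun ω _ h2 => absurd h2 hab
      · exact Filter.Eventually.of_forall fun ω h1 => absurd h1 ha
    have hB : ∀ᵐ ω ∂Q, ∀ a : ℚ, 0 ≤ g a ω := by
      rw [ae_all_iff]; intro a
      exact condExp_nonneg (Filter.Eventually.of_forall fun ω => hfnn (a : ℝ) ω)
    have hC : ∀ᵐ ω ∂Q, ∀ a : ℚ, g a ω ≤ M := by
      rw [ae_all_iff]; intro a
      have h1 := condExp_mono (m := m) (hfint (a : ℝ)) (integrable_const M)
        (Filter.Eventually.of_forall fun ω => hfb (a : ℝ) ω)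
      have hconst : Q[(fun _ => M : Ω → ℝ)|m] = fun _ => M := condExp_const hm M
      filter_upwards [h1] with ω hω
      rwa [hconst] at hω
    have hD : ∀ᵐ ω ∂Q, ∀ a : ℚ, x < (a : ℝ) →
        (Q[fun ω => Z ω * φ x ω|m]) ω ≤ g a ω := by
      rw [ae_all_iff]; intro a
      by_cases hxa : x < (a : ℝ)
      · have h1 := condExp_mono (m := m) (hfint x) (hfint (a : ℝ))
          (Filter.Eventually.of_forall fun ω =>
            mul_le_mul_of_nonneg_left (hφmono ω hx (hx.trans hxa.le) hxa.le) (hZ0 ω))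
        exact h1.mono fun ω h _ => h
      · exact Filter.Eventually.of_forall fun ω h => absurd h hxa
    have hmax : max x 0 = x := max_eq_left hx
    -- pointwise identification on the good set
    have hkey : ∀ᵐ ω ∂Q, Tendsto (fun n => g (q n) ω) atTop (𝓝 ((Ghat x ω).toReal)) ∧
        (Q[fun ω => Z ω * φ x ω|m]) ω ≤ (Ghat x ω).toReal ∧
        0 ≤ (Ghat x ω).toReal ∧ (Ghat x ω).toReal ≤ M := by
      filter_upwards [hA, hB, hC, hD] with ω hA hB hC hD
      have hs_anti : Antitone fun n => g (q n) ω := antitone_nat_of_succ_le fun n =>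
        hA (q (n + 1)) (q n) (hx.trans (hqx (n + 1)).le) (hqanti n)
      have hs_bdd : BddBelow (Set.range fun n => g (q n) ω) :=
        ⟨0, by rintro y ⟨n, rfl⟩; exact hB (q n)⟩
      set L : ℝ := ⨅ n, g (q n) ω with hLdef
      have hs_tend : Tendsto (fun n => g (q n) ω) atTop (𝓝 L) :=
        tendsto_atTop_ciInf hs_anti hs_bdd
      have hL0 : 0 ≤ L := le_ciInf fun n => hB (q n)
      have hLM : L ≤ M := (ciInf_le hs_bdd 0).trans (hC (q 0))
      have hGhat_eq : Ghat x ω = ENNReal.ofReal L := by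
        apply le_antisymm
        · refine ge_of_tendsto' ((ENNReal.continuous_ofReal.tendsto L).comp hs_tend)
            fun n => ?_
          have h1 : Ghat x ω ≤
              (if (max x 0 : ℝ) < ((q n : ℚ) : ℝ) then ENNReal.ofReal (g (q n) ω) else ⊤) :=
            iInf_le _ (q n)
          rwa [if_pos (by rw [hmax]; exact hqx n)] at h1
        · refine le_iInf fun r => ?_
          by_cases hr : (max x 0 : ℝ) < (r : ℝ)
          · rw [if_pos hr]
            rw [hmax] at hr
            obtain ⟨n, hn⟩ := hqle r hr
            refine ENNReal.ofReal_le_ofReal ?_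
            exact (ciInf_le hs_bdd n).trans (hA (q n) r (hx.trans (hqx n).le) hn)
          · rw [if_neg hr]; exact le_top
      have hGL : (Ghat x ω).toReal = L := by
        rw [hGhat_eq, ENNReal.toReal_ofReal hL0]
      rw [hGL]
      refine ⟨hs_tend, ?_, hL0, hLM⟩
      refine le_ciInf fun n => hD (q n) (hqx n)
    -- integrate
    have hGxmeas : Measurable fun ω => (Ghat x ω).toReal := by
      refine Measurable.ennreal_toReal ?_
      refine Measurable.iInf fun r => ?_
      by_cases h : (max x 0 : ℝ) < (r : ℝ)
      · simpa [h] using ((hgmeas r).mono hm le_rfl).ennreal_ofReal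
      · simp [h]
    have hGxint : Integrable (fun ω => (Ghat x ω).toReal) Q := by
      refine ⟨hGxmeas.aestronglyMeasurable, HasFiniteIntegral.of_bounded (C := M) ?_⟩
      refine hkey.mono fun ω h => ?_
      rw [Real.norm_eq_abs, abs_of_nonneg h.2.2.1]; exact h.2.2.2
    have hIG : Tendsto (fun n => ∫ ω, g (q n) ω ∂Q) atTop
        (𝓝 (∫ ω, (Ghat x ω).toReal ∂Q)) := by
      refine tendsto_integral_of_dominated_convergence (fun _ => M)
        (fun n => ((hgmeas (q n)).mono hm le_rfl).aestronglyMeasurable) (integrable_const M)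
        (fun n => ?_) (hkey.mono fun ω h => h.1)
      filter_upwards [hB, hC] with ω h1 h2
      rw [Real.norm_eq_abs, abs_of_nonneg (h1 (q n))]; exact h2 (q n)
    have hIf : Tendsto (fun n => ∫ ω, Z ω * φ (q n : ℝ) ω ∂Q) atTop
        (𝓝 (∫ ω, Z ω * φ x ω ∂Q)) := by
      refine tendsto_integral_of_dominated_convergence (fun _ => M)
        (fun n => (hfmeas (q n : ℝ)).aestronglyMeasurable) (integrable_const M)
        (fun n => Filter.Eventually.of_forall fun ω => ?_)
        (Filter.Eventually.of_forall fun ω => ((hφtend ω).const_mul (Z ω)))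
      rw [Real.norm_eq_abs, abs_of_nonneg (hfnn _ ω)]; exact hfb _ ω
    have heqn : (fun n => ∫ ω, g (q n) ω ∂Q) = fun n => ∫ ω, Z ω * φ (q n : ℝ) ω ∂Q :=
      funext fun n => integral_condExp hm
    rw [heqn] at hIG
    have hint_eq : ∫ ω, (Ghat x ω).toReal ∂Q = ∫ ω, Z ω * φ x ω ∂Q :=
      tendsto_nhds_unique hIG hIf
    have hcond_int_eq : ∫ ω, (Q[fun ω => Z ω * φ x ω|m]) ω ∂Q = ∫ ω, Z ω * φ x ω ∂Q :=
      integral_condExp hm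
    have hdiff_nonneg : 0 ≤ᵐ[Q]
        fun ω => (Ghat x ω).toReal - (Q[fun ω => Z ω * φ x ω|m]) ω :=
      hkey.mono fun ω h => sub_nonneg.2 h.2.1
    have hdiff_int : Integrable
        (fun ω => (Ghat x ω).toReal - (Q[fun ω => Z ω * φ x ω|m]) ω) Q :=
      hGxint.sub integrable_condExp
    have hzero : ∫ ω, ((Ghat x ω).toReal - (Q[fun ω => Z ω * φ x ω|m]) ω) ∂Q = 0 := by
      rw [integral_sub hGxint integrable_condExp, hint_eq, hcond_int_eq, sub_self]
    have hae := (integral_eq_zero_iff_of_nonneg_ae hdiff_nonneg hdiff_int).1 hzero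
    filter_upwards [hae] with ω h
    have : (Ghat x ω).toReal - (Q[fun ω => Z ω * φ x ω|m]) ω = 0 := h
    linarith
end

section
/- Let (Ω, F, P) be a probability space, let T > 0, and let W₁, W₂ : Ω → ℝ be independent random variables, each with Gaussian law of mean 0 and variance T. Let y₀ > 0, K > 0, μ ∈ ℝ, σ > 0, and ρ ∈ (−1, 1), and define Y := y₀ · exp( μT + σ(ρ W₁ + √(1−ρ²) W₂) − σ²T/2 ). Then for every x with 0 < x < K, P-almost surely, P( (K − Y)⁺ ≤ x | σ(W₁) ) = 1 − Φ( ( ln((K−x)/y₀) − μT − σρW₁ + σ²T/2 ) / ( σ√(T(1−ρ²)) ) ), where (·)⁺ denotes the positive part and Φ is the cumulative distribution function of the standard normal distribution. -/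
/-!
Given `W₁`, the event `(K - Y)⁺ ≤ x` is the half-line event `W₂ ≥ c(W₁)` for an explicit affine
`c`. Since `W₂` is independent of `W₁`, its conditional law given `W₁` is its own law `N(0, T)`,
so the conditional probability is the Gaussian tail `P(N(0, T) ≥ c(W₁)) = 1 - Φ(c(W₁) / √T)`.
-/

open MeasureTheory

/-- Cumulative distribution function of the standard normal distribution. -/
noncomputable def stdNormalCDF (x : ℝ) : ℝ :=
  (ProbabilityTheory.gaussianReal 0 1 (Set.Iic x)).toReal

open ProbabilityTheory Set

section Independence

variable {α β Ω : Type*} {mα : MeasurableSpace α} {mβ : MeasurableSpace β} {mΩ : MeasurableSpace Ω}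
  [StandardBorelSpace Ω] [Nonempty Ω] {μ : Measure α} [IsFiniteMeasure μ] {X : α → β} {Y : α → Ω}

theorem condDistrib_ae_eq_const_of_indepFun (hX : Measurable X) (hY : Measurable Y)
    (h : IndepFun X Y μ) : condDistrib Y X μ =ᵐ[μ.map X] Kernel.const β (μ.map Y) := by
  rw [condDistrib_ae_eq_iff_measure_eq_compProd X hY.aemeasurable, Measure.compProd_const]
  exact (indepFun_iff_map_prod_eq_prod_map_map hX.aemeasurable hY.aemeasurable).mp h

theorem condExp_indicator_preimage_ae_eq_of_indepFun (hX : Measurable X) (hY : Measurable Y)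
    (h : IndepFun X Y μ) {s : Set (β × Ω)} (hs : MeasurableSet s) :
    μ[((fun a => (X a, Y a)) ⁻¹' s).indicator (fun _ => (1 : ℝ)) | mβ.comap X]
      =ᵐ[μ] fun a => (μ.map Y).real (Prod.mk (X a) ⁻¹' s) := by
  have hind : ((fun a => (X a, Y a)) ⁻¹' s).indicator (fun _ => (1 : ℝ))
      = fun a => s.indicator (fun _ => 1) (X a, Y a) := rfl
  have hcond := condExp_prod_ae_eq_integral_condDistrib hX hY.aemeasurable
    (stronglyMeasurable_const.indicator hs) ((integrable_const (μ := μ) (1 : ℝ)).indicator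
      ((hX.prodMk hY) hs))
  filter_upwards [hcond, ae_of_ae_map hX.aemeasurable (condDistrib_ae_eq_const_of_indepFun hX hY h)]
    with a ha hconst
  rw [hind, ha, hconst, Kernel.const_apply]
  exact integral_indicator_one (measurable_prodMk_left hs)

end Independence

lemma gaussianReal_real_Ici {m : ℝ} {v : NNReal} (hv : v ≠ 0) (a : ℝ) :
    (gaussianReal m v).real (Ici a) = 1 - stdNormalCDF ((a - m) / √v) := by
  have hsv : 0 < √(v : ℝ) := by positivity
  have hscale : ((gaussianReal 0 1).map (√(v : ℝ) * ·)).map (· + m) = gaussianReal m v := by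
    rw [gaussianReal_map_const_mul, gaussianReal_map_add_const, mul_zero, zero_add]
    congr
    ext
    simp [Real.sq_sqrt v.coe_nonneg]
  have := nullSingletonClass_gaussianReal (μ := 0) one_ne_zero
  rw [← hscale, map_measureReal_apply (by fun_prop) measurableSet_Ici, preimage_add_const_Ici,
    map_measureReal_apply (by fun_prop) measurableSet_Ici, preimage_const_mul_Ici₀ _ hsv,
    ← compl_Iio, probReal_compl_eq_one_sub measurableSet_Iio, measureReal_congr Iio_ae_eq_Iic]
  rfl

lemma put_payoff_le_iff {K x y₀ z : ℝ} (hx : 0 ≤ x) (hxK : x < K) (hy₀ : 0 < y₀) :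
    max (K - y₀ * Real.exp z) 0 ≤ x ↔ Real.log ((K - x) / y₀) ≤ z := by
  rw [max_le_iff, Real.log_le_iff_le_exp (div_pos (sub_pos.mpr hxK) hy₀), div_le_iff₀ hy₀]
  constructor
  · rintro ⟨h, -⟩
    linarith
  · intro h
    exact ⟨by linarith, hx⟩

theorem stmt9_general {Ω : Type*} [mΩ : MeasurableSpace Ω] (P : Measure Ω) [IsProbabilityMeasure P]
    (T : ℝ) (hT : 0 < T)
    (W₁ W₂ : Ω → ℝ) (hW₁ : Measurable W₁) (hW₂ : Measurable W₂)
    (hlaw₂ : Measure.map W₂ P = ProbabilityTheory.gaussianReal 0 (Real.toNNReal T))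
    (hindep : ProbabilityTheory.IndepFun W₁ W₂ P)
    (y₀ K μ σ ρ : ℝ) (hy₀ : 0 < y₀) (hσ : 0 < σ)
    (hρ₁ : -1 < ρ) (hρ₂ : ρ < 1)
    (Y : Ω → ℝ)
    (hY : Y = fun ω =>
      y₀ * Real.exp (μ * T + σ * (ρ * W₁ ω + Real.sqrt (1 - ρ ^ 2) * W₂ ω) - σ ^ 2 * T / 2))
    (x : ℝ) (hx0 : 0 < x) (hxK : x < K) :
    P[Set.indicator {ω | max (K - Y ω) 0 ≤ x} (fun _ => (1 : ℝ)) |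
        MeasurableSpace.comap W₁ (inferInstance : MeasurableSpace ℝ)]
      =ᵐ[P] fun ω => 1 - stdNormalCDF
        ((Real.log ((K - x) / y₀) - μ * T - σ * ρ * W₁ ω + σ ^ 2 * T / 2) /
          (σ * Real.sqrt (T * (1 - ρ ^ 2)))) := by
  have hρ : 0 < 1 - ρ ^ 2 := by nlinarith
  have hσs : 0 < σ * Real.sqrt (1 - ρ ^ 2) := mul_pos hσ (Real.sqrt_pos.mpr hρ)
  set c : ℝ → ℝ := fun w =>
    (Real.log ((K - x) / y₀) - μ * T - σ * ρ * w + σ ^ 2 * T / 2) / (σ * Real.sqrt (1 - ρ ^ 2))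
  have hevent : {ω | max (K - Y ω) 0 ≤ x} = (fun ω => (W₁ ω, W₂ ω)) ⁻¹' {p | c p.1 ≤ p.2} := by
    ext ω
    simp only [hY, mem_ofPred_eq, mem_preimage, put_payoff_le_iff hx0.le hxK hy₀, c,
      div_le_iff₀ hσs]
    constructor <;> intro h <;> linarith
  have hc : MeasurableSet {p : ℝ × ℝ | c p.1 ≤ p.2} := measurableSet_le (by fun_prop) measurable_snd
  rw [hevent]
  filter_upwards [condExp_indicator_preimage_ae_eq_of_indepFun hW₁ hW₂ hindep hc] with ω hω
  rw [hω, hlaw₂, show Prod.mk (W₁ ω) ⁻¹' {p : ℝ × ℝ | c p.1 ≤ p.2} = Ici (c (W₁ ω)) from rfl,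
    gaussianReal_real_Ici (Real.toNNReal_pos.mpr hT).ne', sub_zero, Real.coe_toNNReal T hT.le,
    Real.sqrt_mul hT.le, div_div]
  congr 2
  ring

/-- Explicit conditional-probability formula from Section 3 of the paper: for the lognormal
nontradable asset `Y` driven by `ρ W₁ + √(1-ρ²) W₂` with `W₁, W₂` independent Gaussians of
mean `0` and variance `T`, the conditional probability given `σ(W₁)` that the put payoff
`(K - Y)⁺` is at most `x` (for `0 < x < K`) equals
`1 - Φ((ln((K-x)/y₀) - μT - σρW₁ + σ²T/2) / (σ√(T(1-ρ²))))` a.s. -/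
theorem stmt9 {Ω : Type*} [mΩ : MeasurableSpace Ω] (P : Measure Ω) [IsProbabilityMeasure P]
    (T : ℝ) (hT : 0 < T)
    (W₁ W₂ : Ω → ℝ) (hW₁ : Measurable W₁) (hW₂ : Measurable W₂)
    (hlaw₁ : Measure.map W₁ P = ProbabilityTheory.gaussianReal 0 (Real.toNNReal T))
    (hlaw₂ : Measure.map W₂ P = ProbabilityTheory.gaussianReal 0 (Real.toNNReal T))
    (hindep : ProbabilityTheory.IndepFun W₁ W₂ P)
    (y₀ K μ σ ρ : ℝ) (hy₀ : 0 < y₀) (hK : 0 < K) (hσ : 0 < σ)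
    (hρ₁ : -1 < ρ) (hρ₂ : ρ < 1)
    (Y : Ω → ℝ)
    (hY : Y = fun ω =>
      y₀ * Real.exp (μ * T + σ * (ρ * W₁ ω + Real.sqrt (1 - ρ ^ 2) * W₂ ω) - σ ^ 2 * T / 2))
    (x : ℝ) (hx0 : 0 < x) (hxK : x < K) :
    P[Set.indicator {ω | max (K - Y ω) 0 ≤ x} (fun _ => (1 : ℝ)) |
        MeasurableSpace.comap W₁ (inferInstance : MeasurableSpace ℝ)]
      =ᵐ[P] fun ω => 1 - stdNormalCDF
        ((Real.log ((K - x) / y₀) - μ * T - σ * ρ * W₁ ω + σ ^ 2 * T / 2) /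
          (σ * Real.sqrt (T * (1 - ρ ^ 2)))) :=
  stmt9_general (mΩ := mΩ) P T hT W₁ W₂ hW₁ hW₂ hlaw₂ hindep y₀ K μ σ ρ hy₀ hσ hρ₁ hρ₂ Y hY x hx0
    hxK
end
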